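/- arXiv:0803.0433 — 5 statements merged into one kernel-verified Lean document; each statement's English description precedes it below -/
import Mathlib

section
/- Let K ⊂ ℝⁿ (n ≥ 2) be a compact convex body of volume 1, and let m(y,z) denote the (n−2)-dimensional Lebesgue measure of the section {x ∈ K : x₁ = y, x₂ = z}. For bounded measurable functions f, g : ℝ → ℝ, letting X = (X₁,…,Xₙ) be uniformly distributed on K, the covariance satisfies: cov(f(X₁), g(X₂)) = (1/4) ∫_{ℝ⁴} (m(y,z)·m(ȳ,z̄) − m(y,z̄)·m(ȳ,z)) · (f(y) − f(ȳ)) · (g(z) − g(z̄)) dy dz dȳ dz̄. -/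
/-!
By Fubini over the last `n - 2` coordinates, `m` is the density of the law of `(X₁, X₂)`, and
`∫ m = |K| = 1`. Swapping `z ↔ z̄` carries `m(y, z̄) m(ȳ, z)` to `m(y, z) m(ȳ, z̄)` and flips the
sign of `g(z) - g(z̄)`, so the right-hand side equals
`(1/2) ∫∫ m(a) m(b) (f a₁ - f b₁) (g a₂ - g b₂) da db` over pairs of points `a, b ∈ ℝ²`.
Expanding the product, this is `∫ m · ∫ m f g - ∫ m f · ∫ m g`, the covariance.
-/

open MeasureTheory

namespace MeasurableEquiv

variable (α : Type*) [MeasurableSpace α]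

def prodProdProdComm (β γ δ : Type*) [MeasurableSpace β] [MeasurableSpace γ]
    [MeasurableSpace δ] : (α × β) × γ × δ ≃ᵐ (α × γ) × β × δ where
  toEquiv := Equiv.prodProdProdComm α β γ δ
  measurable_toFun := by dsimp [Equiv.prodProdProdComm]; fun_prop
  measurable_invFun := by dsimp [Equiv.prodProdProdComm]; fun_prop

def piFinConsCons (k : ℕ) : (α × α) × (Fin k → α) ≃ᵐ (Fin (k + 2) → α) :=
  prodAssoc.trans <| ((refl α).prodCongr (piFinSuccAbove (fun _ => α) 0).symm).trans
    (piFinSuccAbove (fun _ => α) 0).symm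

variable {α}

@[simp]
theorem piFinConsCons_apply {k : ℕ} (p : (α × α) × (Fin k → α)) :
    piFinConsCons α k p = Fin.cons p.1.1 (Fin.cons p.1.2 p.2) := by
  simp [piFinConsCons, prodCongr, Equiv.prodCongr, Fin.consEquiv, prodAssoc]

end MeasurableEquiv

namespace MeasureTheory

theorem measurePreserving_prodProdProdComm {α β γ δ : Type*} [MeasurableSpace α]
    [MeasurableSpace β] [MeasurableSpace γ] [MeasurableSpace δ] (μa : Measure α) (μb : Measure β)
    (μc : Measure γ) (μd : Measure δ) [SFinite μa] [SFinite μb] [SFinite μc] [SFinite μd] :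
    MeasurePreserving (MeasurableEquiv.prodProdProdComm α β γ δ)
      ((μa.prod μb).prod (μc.prod μd)) ((μa.prod μc).prod (μb.prod μd)) :=
  (measurePreserving_prodAssoc μa μc (μb.prod μd)).symm.comp <|
    ((MeasurePreserving.id μa).prod <|
      (measurePreserving_prodAssoc μc μb μd).comp <|
        (Measure.measurePreserving_swap.prod (MeasurePreserving.id μd)).comp
          (measurePreserving_prodAssoc μb μc μd).symm).comp
    (measurePreserving_prodAssoc μa μb (μc.prod μd))

theorem volume_preserving_piFinConsCons (α : Type*) [MeasureSpace α]
    [SigmaFinite (volume : Measure α)] (k : ℕ) :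
    MeasurePreserving (MeasurableEquiv.piFinConsCons α k) :=
  (volume_preserving_piFinSuccAbove (fun _ => α) 0).symm _ |>.comp <|
    ((MeasurePreserving.id volume).prod
      ((volume_preserving_piFinSuccAbove (fun _ => α) 0).symm _)).comp
    (measurePreserving_prodAssoc volume volume volume)

section Marginal

variable {α β : Type*} [MeasurableSpace α] [MeasurableSpace β] {μ : Measure α} {ν : Measure β}
  {S : Set (α × β)} {φ : α → ℝ} {C : ℝ}

theorem integral_indicator_comp_fst_prodMk (hS : MeasurableSet S) (a : α) :
    ∫ b, S.indicator (fun p => φ p.1) (a, b) ∂ν = ν.real (Prod.mk a ⁻¹' S) * φ a :=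
  integral_indicator_const (φ a) (measurable_prodMk_left hS)

theorem integrable_indicator_comp_fst (hS : MeasurableSet S) (hSfin : μ.prod ν S ≠ ⊤)
    (hφ : AEStronglyMeasurable φ μ) (hφC : ∀ a, ‖φ a‖ ≤ C) :
    Integrable (S.indicator fun p => φ p.1) (μ.prod ν) :=
  (integrable_indicator_iff hS).2 <|
    Measure.integrableOn_of_bounded hSfin hφ.comp_fst (ae_of_all _ fun p => hφC p.1)

variable [SFinite ν]

theorem integrable_measureReal_prodMk_mul (hS : MeasurableSet S) (hSfin : μ.prod ν S ≠ ⊤)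
    (hφ : AEStronglyMeasurable φ μ) (hφC : ∀ a, ‖φ a‖ ≤ C) :
    Integrable (fun a => ν.real (Prod.mk a ⁻¹' S) * φ a) μ :=
  (integrable_indicator_comp_fst hS hSfin hφ hφC).integral_prod_left.congr <|
    ae_of_all _ (integral_indicator_comp_fst_prodMk hS)

theorem integral_measureReal_prodMk_mul [SFinite μ] (hS : MeasurableSet S)
    (hSfin : μ.prod ν S ≠ ⊤) (hφ : AEStronglyMeasurable φ μ) (hφC : ∀ a, ‖φ a‖ ≤ C) :
    ∫ a, ν.real (Prod.mk a ⁻¹' S) * φ a ∂μ = ∫ p in S, φ p.1 ∂μ.prod ν :=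
  calc ∫ a, ν.real (Prod.mk a ⁻¹' S) * φ a ∂μ
      = ∫ a, ∫ b, S.indicator (fun p => φ p.1) (a, b) ∂ν ∂μ := by
        simp only [integral_indicator_comp_fst_prodMk hS]
    _ = ∫ p, S.indicator (fun p => φ p.1) p ∂μ.prod ν :=
        (integral_prod _ (integrable_indicator_comp_fst hS hSfin hφ hφC)).symm
    _ = ∫ p in S, φ p.1 ∂μ.prod ν := integral_indicator hS

end Marginal

section SliceVolume

variable {α : Type*} [MeasureSpace α] {k : ℕ}

noncomputable def sliceVolume (K : Set (Fin (k + 2) → α)) (q : α × α) : ℝ :=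
  (volume {w : Fin k → α | Fin.cons q.1 (Fin.cons q.2 w) ∈ K}).toReal

theorem sliceVolume_eq_measureReal (K : Set (Fin (k + 2) → α)) (q : α × α) :
    sliceVolume K q = volume.real (Prod.mk q ⁻¹' (MeasurableEquiv.piFinConsCons α k ⁻¹' K)) := by
  simp [sliceVolume, Measure.real, Set.preimage]

variable [SigmaFinite (volume : Measure α)] {K : Set (Fin (k + 2) → α)} {φ : α × α → ℝ} {C : ℝ}

theorem volume_prod_preimage_piFinConsCons (K : Set (Fin (k + 2) → α)) :
    (volume.prod volume) (MeasurableEquiv.piFinConsCons α k ⁻¹' K) = volume K :=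
  (volume_preserving_piFinConsCons α k).measure_preimage_equiv K

theorem integrable_sliceVolume_mul (hK : MeasurableSet K) (hKfin : volume K ≠ ⊤)
    (hφ : AEStronglyMeasurable φ) (hφC : ∀ q, ‖φ q‖ ≤ C) :
    Integrable fun q => sliceVolume K q * φ q := by
  simp only [sliceVolume_eq_measureReal]
  exact integrable_measureReal_prodMk_mul (hK.preimage (MeasurableEquiv.measurable _))
    (by rwa [volume_prod_preimage_piFinConsCons]) hφ hφC

theorem integral_sliceVolume_mul (hK : MeasurableSet K) (hKfin : volume K ≠ ⊤)
    (hφ : AEStronglyMeasurable φ) (hφC : ∀ q, ‖φ q‖ ≤ C) :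
    ∫ q, sliceVolume K q * φ q = ∫ x in K, φ (x 0, x 1) := by
  simp only [sliceVolume_eq_measureReal]
  rw [integral_measureReal_prodMk_mul (hK.preimage (MeasurableEquiv.measurable _))
      (by rwa [volume_prod_preimage_piFinConsCons]) hφ hφC, ← Measure.volume_eq_prod,
    ← (volume_preserving_piFinConsCons α k).setIntegral_preimage_emb
      (MeasurableEquiv.measurableEmbedding _)]
  simp

end SliceVolume

section Symmetrization

variable {Ω : Type*}

theorem mul_mul_sub_mul_sub_eq (ρ u v : Ω → ℝ) (p : Ω × Ω) :
    ρ p.1 * ρ p.2 * ((u p.1 - u p.2) * (v p.1 - v p.2)) =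
      ρ p.1 * (u p.1 * v p.1) * ρ p.2 - ρ p.1 * u p.1 * (ρ p.2 * v p.2) -
        ρ p.1 * v p.1 * (ρ p.2 * u p.2) + ρ p.1 * (ρ p.2 * (u p.2 * v p.2)) := by
  ring

variable [MeasurableSpace Ω] {μ : Measure Ω} {ρ u v : Ω → ℝ}

theorem integrable_mul_mul_sub_mul_sub (hρ : Integrable ρ μ)
    (hρu : Integrable (fun x => ρ x * u x) μ) (hρv : Integrable (fun x => ρ x * v x) μ)
    (hρuv : Integrable (fun x => ρ x * (u x * v x)) μ) :
    Integrable (fun p => ρ p.1 * ρ p.2 * ((u p.1 - u p.2) * (v p.1 - v p.2))) (μ.prod μ) := by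
  simp only [mul_mul_sub_mul_sub_eq ρ u v]
  exact (((hρuv.mul_prod hρ).sub (hρu.mul_prod hρv)).sub (hρv.mul_prod hρu)).add
    (hρ.mul_prod hρuv)

theorem integral_mul_mul_sub_mul_sub [SFinite μ] (hρ : Integrable ρ μ)
    (hρu : Integrable (fun x => ρ x * u x) μ) (hρv : Integrable (fun x => ρ x * v x) μ)
    (hρuv : Integrable (fun x => ρ x * (u x * v x)) μ) :
    ∫ p, ρ p.1 * ρ p.2 * ((u p.1 - u p.2) * (v p.1 - v p.2)) ∂μ.prod μ =
      2 * ((∫ x, ρ x ∂μ) * (∫ x, ρ x * (u x * v x) ∂μ) -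
        (∫ x, ρ x * u x ∂μ) * ∫ x, ρ x * v x ∂μ) := by
  simp only [mul_mul_sub_mul_sub_eq ρ u v]
  have h₁ := hρuv.mul_prod hρ
  have h₂ := hρu.mul_prod hρv
  have h₃ := hρv.mul_prod hρu
  rw [integral_add ?_ (hρ.mul_prod hρuv), integral_sub ?_ h₃, integral_sub h₁ h₂,
    integral_prod_mul (fun x => ρ x * (u x * v x)) ρ,
    integral_prod_mul (fun x => ρ x * u x) (fun x => ρ x * v x),
    integral_prod_mul (fun x => ρ x * v x) (fun x => ρ x * u x),
    integral_prod_mul ρ (fun x => ρ x * (u x * v x))]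
  · ring
  · exact h₁.sub h₂
  · exact (h₁.sub h₂).sub h₃

end Symmetrization

theorem integral_det_mul_sub_mul_sub {α : Type*} [MeasureSpace α]
    [SigmaFinite (volume : Measure α)] {F : α → α → ℝ} {f g : α → ℝ}
    (hint : Integrable fun q : (α × α) × (α × α) =>
      F q.1.1 q.1.2 * F q.2.1 q.2.2 * ((f q.1.1 - f q.2.1) * (g q.1.2 - g q.2.2))) :
    ∫ p : α × α × α × α,
      (F p.1 p.2.2.1 * F p.2.1 p.2.2.2 - F p.1 p.2.2.2 * F p.2.1 p.2.2.1) *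
        (f p.1 - f p.2.1) * (g p.2.2.1 - g p.2.2.2) =
    2 * ∫ q : (α × α) × (α × α),
      F q.1.1 q.1.2 * F q.2.1 q.2.2 * ((f q.1.1 - f q.2.1) * (g q.1.2 - g q.2.2)) := by
  let e := (MeasurableEquiv.prodProdProdComm α α α α).trans MeasurableEquiv.prodAssoc
  have he : MeasurePreserving e :=
    (measurePreserving_prodAssoc volume volume (volume.prod volume)).comp
      (measurePreserving_prodProdProdComm volume volume volume volume)
  let σ : α × α × α × α ≃ᵐ α × α × α × α :=
    (MeasurableEquiv.refl α).prodCongr ((MeasurableEquiv.refl α).prodCongr .prodComm)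
  have hσ : MeasurePreserving σ :=
    (MeasurePreserving.id volume).prod
      ((MeasurePreserving.id volume).prod Measure.measurePreserving_swap)
  let T (p : α × α × α × α) : ℝ :=
    F p.1 p.2.2.1 * F p.2.1 p.2.2.2 * ((f p.1 - f p.2.1) * (g p.2.2.1 - g p.2.2.2))
  have hT : Integrable T := (he.integrable_comp_emb e.measurableEmbedding).1 hint
  have hTσ : Integrable fun p => T (σ p) := (hσ.integrable_comp_emb σ.measurableEmbedding).2 hT
  calc _ = ∫ p, T p + T (σ p) := integral_congr_ae <| ae_of_all _ fun p => by
          change _ = T p + F p.1 p.2.2.2 * F p.2.1 p.2.2.1 *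
            ((f p.1 - f p.2.1) * (g p.2.2.2 - g p.2.2.1))
          ring
    _ = 2 * ∫ p, T p := by rw [integral_add hT hTσ, hσ.integral_comp' T]; ring
    _ = _ := congrArg (2 * ·) (he.integral_comp' T).symm

end MeasureTheory

theorem covariance_formula_general (k : ℕ) (K : Set (Fin (k + 2) → ℝ))
    (hKc : IsCompact K) (hvol : volume K = 1)
    (f g : ℝ → ℝ) (hf : Measurable f) (hg : Measurable g)
    (Cf Cg : ℝ) (hfb : ∀ t, |f t| ≤ Cf) (hgb : ∀ t, |g t| ≤ Cg)
    (m : ℝ → ℝ → ℝ)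
    (hm : ∀ y z, m y z =
      (volume {w : Fin k → ℝ | Fin.cons y (Fin.cons z w) ∈ K}).toReal) :
    (∫ x in K, f (x 0) * g (x 1)) -
      (∫ x in K, f (x 0)) * (∫ x in K, g (x 1)) =
    (1 / 4) * ∫ p : ℝ × ℝ × ℝ × ℝ,
      (m p.1 p.2.2.1 * m p.2.1 p.2.2.2 - m p.1 p.2.2.2 * m p.2.1 p.2.2.1) *
        (f p.1 - f p.2.1) * (g p.2.2.1 - g p.2.2.2) := by
  have hK : MeasurableSet K := hKc.isClosed.measurableSet
  have hKfin : volume K ≠ ⊤ := by simp [hvol]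
  have hmK : ∀ q : ℝ × ℝ, m q.1 q.2 = sliceVolume K q := fun q => hm q.1 q.2
  have hint {φ : ℝ × ℝ → ℝ} {C : ℝ} (hφ : Measurable φ) (hφC : ∀ q, ‖φ q‖ ≤ C) :
      Integrable fun q : ℝ × ℝ => m q.1 q.2 * φ q := by
    simpa only [hmK] using integrable_sliceVolume_mul hK hKfin hφ.aestronglyMeasurable hφC
  have hintegral {φ : ℝ × ℝ → ℝ} {C : ℝ} (hφ : Measurable φ) (hφC : ∀ q, ‖φ q‖ ≤ C) :
      ∫ q : ℝ × ℝ, m q.1 q.2 * φ q = ∫ x in K, φ (x 0, x 1) := by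
    simpa only [hmK] using integral_sliceVolume_mul hK hKfin hφ.aestronglyMeasurable hφC
  have hf' : Measurable fun q : ℝ × ℝ => f q.1 := hf.comp measurable_fst
  have hg' : Measurable fun q : ℝ × ℝ => g q.2 := hg.comp measurable_snd
  have hfg' : Measurable fun q : ℝ × ℝ => f q.1 * g q.2 := hf'.mul hg'
  have hfC : ∀ q : ℝ × ℝ, ‖f q.1‖ ≤ Cf := fun q => hfb q.1
  have hgC : ∀ q : ℝ × ℝ, ‖g q.2‖ ≤ Cg := fun q => hgb q.2
  have hfgC : ∀ q : ℝ × ℝ, ‖f q.1 * g q.2‖ ≤ Cf * Cg := fun q => by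
    rw [norm_mul]; exact mul_le_mul (hfC q) (hgC q) (norm_nonneg _) ((abs_nonneg _).trans (hfb 0))
  have hM : Integrable fun q : ℝ × ℝ => m q.1 q.2 := by
    simpa only [mul_one] using hint measurable_const fun _ => norm_one.le
  have hMK : ∫ q : ℝ × ℝ, m q.1 q.2 = 1 := by
    simpa [measureReal_def, hvol] using hintegral measurable_const fun _ => norm_one.le
  have hu := hint hf' hfC
  have hv := hint hg' hgC
  have huv := hint hfg' hfgC
  rw [integral_det_mul_sub_mul_sub (integrable_mul_mul_sub_mul_sub hM hu hv huv),
    Measure.volume_eq_prod, integral_mul_mul_sub_mul_sub hM hu hv huv, hMK,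
    hintegral hf' hfC, hintegral hg' hgC, hintegral hfg' hfgC]
  ring

theorem covariance_formula (k : ℕ) (K : Set (Fin (k + 2) → ℝ))
    (hKc : IsCompact K) (hconv : Convex ℝ K) (hvol : volume K = 1)
    (f g : ℝ → ℝ) (hf : Measurable f) (hg : Measurable g)
    (Cf Cg : ℝ) (hfb : ∀ t, |f t| ≤ Cf) (hgb : ∀ t, |g t| ≤ Cg)
    (m : ℝ → ℝ → ℝ)
    (hm : ∀ y z, m y z =
      (volume {w : Fin k → ℝ | Fin.cons y (Fin.cons z w) ∈ K}).toReal) :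
    (∫ x in K, f (x 0) * g (x 1)) -
      (∫ x in K, f (x 0)) * (∫ x in K, g (x 1)) =
    (1 / 4) * ∫ p : ℝ × ℝ × ℝ × ℝ,
      (m p.1 p.2.2.1 * m p.2.1 p.2.2.2 - m p.1 p.2.2.2 * m p.2.1 p.2.2.1) *
        (f p.1 - f p.2.1) * (g p.2.2.1 - g p.2.2.2) :=
  covariance_formula_general k K hKc hvol f g hf hg Cf Cg hfb hgb m hm
end

section
/- Let K ⊂ ℝⁿ be a generalized Orlicz ball, i.e. K = {x ∈ ℝⁿ : Σᵢ fᵢ(|xᵢ|) ≤ 1} where each fᵢ : [0,∞) → [0,∞) is convex, increasing, with fᵢ(0) = 0. Let m(y,z) be the (n−2)-dimensional measure of the section of K at x₁ = y, x₂ = z. Then for all y > ȳ > 0 and z > z̄ > 0: m(y,z̄)·m(ȳ,z) ≥ m(y,z)·m(ȳ,z̄). -/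
/-!
Put `ψᵢ(s) = f_{i+2}(|s|)` and `V(s) = vol {w ∈ ℝⁿ⁻² : ∑ ψᵢ(wᵢ) ≤ s}`, so that
`m(y, z) = V(1 - f₁(|y|) - f₂(|z|))`. The function `V` is log-concave: by Fubini,
`V_{k+1}(s) = ∫ V_k(s - ψ₁(x)) dx`, and since `ψ₁` is convex the one-dimensional Prékopa–Leindler
inequality carries log-concavity from `V_k` to `V_{k+1}`. For `y > ȳ > 0`, `z > z̄ > 0` the
arguments `a = 1 - f₁(y) - f₂(z)`, `b`, `c`, `d = 1 - f₁(ȳ) - f₂(z̄)` of `V` in the four section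
measures satisfy `a < b`, `a < c`, `a + d = b + c`, and log-concavity gives `V(a) V(d) ≤ V(b) V(c)`.
-/

open MeasureTheory Set ENNReal

theorem ENNReal.rpow_mul_rpow_le_add {l : ℝ} (hl0 : 0 < l) (hl1 : l < 1) (x y : ℝ≥0∞) :
    x ^ l * y ^ (1 - l) ≤ ENNReal.ofReal l * x + ENNReal.ofReal (1 - l) * y := by
  have h1l : 0 < 1 - l := by linarith
  have hpq := Real.holderConjugate_one_div hl0 h1l (by ring)
  calc x ^ l * y ^ (1 - l)
      ≤ (x ^ l) ^ (1 / l) / ENNReal.ofReal (1 / l)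
        + (y ^ (1 - l)) ^ (1 / (1 - l)) / ENNReal.ofReal (1 / (1 - l)) :=
        young_inequality _ _ hpq
    _ = ENNReal.ofReal l * x + ENNReal.ofReal (1 - l) * y := by
        rw [← rpow_mul, ← rpow_mul, mul_one_div_cancel hl0.ne', mul_one_div_cancel h1l.ne',
          rpow_one, rpow_one, one_div, one_div, ofReal_inv_of_pos hl0, ofReal_inv_of_pos h1l,
          div_eq_mul_inv, div_eq_mul_inv, inv_inv, inv_inv, mul_comm x, mul_comm y]

theorem ENNReal.rpow_mul_rpow_one_sub_self {l : ℝ} (hl0 : 0 ≤ l) (hl1 : l ≤ 1) (x : ℝ≥0∞) :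
    x ^ l * x ^ (1 - l) = x := by
  rw [← rpow_add_of_nonneg _ _ hl0 (sub_nonneg.2 hl1), add_sub_cancel, rpow_one]

theorem Real.volume_add_volume_le_of_add_mem_of_isCompact {K L C : Set ℝ} (hK : IsCompact K)
    (hL : IsCompact L) (hKne : K.Nonempty) (hLne : L.Nonempty)
    (hC : ∀ a ∈ K, ∀ b ∈ L, a + b ∈ C) :
    volume K + volume L ≤ volume C := by
  set a := sInf K
  set b := sSup L
  have hUC : (· + b) '' K ⊆ C := image_subset_iff.2 fun x hx => hC x hx b (hL.sSup_mem hLne)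
  have hVC : (a + ·) '' L ⊆ C := image_subset_iff.2 fun x hx => hC a (hK.sInf_mem hKne) x hx
  have hUV : (· + b) '' K ∩ (a + ·) '' L ⊆ {a + b} := by
    rintro _ ⟨⟨x, hx, rfl⟩, ⟨y, hy, hxy⟩⟩
    have := csInf_le hK.bddBelow hx
    have := le_csSup hL.bddAbove hy
    exact mem_singleton_iff.2 (by linarith)
  calc volume K + volume L = volume ((· + b) '' K) + volume ((a + ·) '' L) := by
        rw [image_add_right, image_add_left, measure_preimage_add_right,
          measure_preimage_add]
    _ = volume ((· + b) '' K ∪ (a + ·) '' L) + volume ((· + b) '' K ∩ (a + ·) '' L) :=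
        (measure_union_add_inter _ ((hL.image (continuous_const_add a)).measurableSet)).symm
    _ ≤ volume C + 0 := by
        gcongr
        · exact union_subset hUC hVC
        · exact (measure_mono hUV).trans Real.volume_singleton.le
    _ = volume C := add_zero _

theorem Real.volume_add_volume_le_of_add_mem {A B C : Set ℝ} (hA : MeasurableSet A)
    (hB : MeasurableSet B) (hAne : A.Nonempty) (hBne : B.Nonempty)
    (hC : ∀ a ∈ A, ∀ b ∈ B, a + b ∈ C) :
    volume A + volume B ≤ volume C := by
  obtain ⟨a₀, ha₀⟩ := hAne
  obtain ⟨b₀, hb₀⟩ := hBne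
  rw [hA.measure_eq_iSup_isCompact, hB.measure_eq_iSup_isCompact]
  simp_rw [iSup_and']
  refine ENNReal.biSup_add_biSup_le' ⟨∅, empty_subset _, isCompact_empty⟩
    ⟨∅, empty_subset _, isCompact_empty⟩ fun K ⟨hKA, hK⟩ L ⟨hLB, hL⟩ => ?_
  calc volume K + volume L ≤ volume (insert a₀ K) + volume (insert b₀ L) := by
        gcongr <;> exact subset_insert _ _
    _ ≤ volume C :=
        Real.volume_add_volume_le_of_add_mem_of_isCompact (hK.insert a₀) (hL.insert b₀)
          (insert_nonempty _ _) (insert_nonempty _ _) fun x hx y hy =>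
            hC x (insert_subset ha₀ hKA hx) y (insert_subset hb₀ hLB hy)

theorem lintegral_min_one_eq_setLIntegral_measure_lt {α : Type*} [MeasurableSpace α]
    (μ : Measure α) {f : α → ℝ≥0∞} (hf : Measurable f) :
    ∫⁻ x, min (f x) 1 ∂μ = ∫⁻ t in Ioo (0 : ℝ) 1, μ {x | ENNReal.ofReal t < f x} := by
  have hfin : ∀ x, min (f x) 1 ≠ ∞ := fun x => ((min_le_right _ _).trans_lt one_lt_top).ne
  calc ∫⁻ x, min (f x) 1 ∂μ = ∫⁻ x, ENNReal.ofReal (min (f x) 1).toReal ∂μ := by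
        simp_rw [ofReal_toReal (hfin _)]
    _ = ∫⁻ t in Ioi 0, μ {x | t < (min (f x) 1).toReal} :=
        lintegral_eq_lintegral_meas_lt μ (.of_forall fun _ => toReal_nonneg)
          (hf.min measurable_const).ennreal_toReal.aemeasurable
    _ = ∫⁻ t in Ioo (0 : ℝ) 1, μ {x | ENNReal.ofReal t < f x} := by
        rw [← lintegral_indicator measurableSet_Ioi, ← lintegral_indicator measurableSet_Ioo]
        congr 1 with t
        by_cases ht : t ∈ Ioo (0 : ℝ) 1
        · rw [indicator_of_mem (show t ∈ Ioi 0 from ht.1), indicator_of_mem ht]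
          congr 1 with x
          rw [mem_ofPred_eq, mem_ofPred_eq, ← ofReal_lt_iff_lt_toReal ht.1.le (hfin x), lt_min_iff,
            and_iff_left (ofReal_lt_one.2 ht.2)]
        · rw [indicator_of_notMem ht]
          refine indicator_apply_eq_zero.2 fun ht0 => ?_
          convert measure_empty (μ := μ)
          refine eq_empty_of_forall_notMem fun x hx => ht ⟨ht0, hx.trans_le ?_⟩
          exact toReal_le_of_le_ofReal zero_le_one (by simp)

theorem lintegral_eq_setLIntegral_measure_lt_of_le_one {α : Type*} [MeasurableSpace α]
    (μ : Measure α) {f : α → ℝ≥0∞} (hf : Measurable f) (hf1 : ∀ x, f x ≤ 1) :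
    ∫⁻ x, f x ∂μ = ∫⁻ t in Ioo (0 : ℝ) 1, μ {x | ENNReal.ofReal t < f x} := by
  simp_rw [← lintegral_min_one_eq_setLIntegral_measure_lt μ hf, min_eq_left (hf1 _)]

theorem volume_superlevel_add_le {f g h : ℝ → ℝ≥0∞} (hf : Measurable f) (hg : Measurable g)
    {l : ℝ} (hl0 : 0 < l) (hl1 : l < 1)
    (hfgh : ∀ x y, f x ^ l * g y ^ (1 - l) ≤ h (l * x + (1 - l) * y)) {c : ℝ≥0∞}
    (hfc : {x | c < f x}.Nonempty) (hgc : {x | c < g x}.Nonempty) :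
    ENNReal.ofReal l * volume {x | c < f x} + ENNReal.ofReal (1 - l) * volume {x | c < g x}
      ≤ volume {x | c < h x} := by
  have h1l : 0 < 1 - l := by linarith
  rw [← pow_one (ENNReal.ofReal l), ← pow_one (ENNReal.ofReal (1 - l)), ← Module.finrank_self ℝ,
    ← ofReal_pow hl0.le, ← ofReal_pow h1l.le, ← Measure.addHaar_smul_of_nonneg _ hl0.le,
    ← Measure.addHaar_smul_of_nonneg _ h1l.le]
  refine Real.volume_add_volume_le_of_add_mem
    ((measurableSet_lt measurable_const hf).const_smul_of_ne_zero hl0.ne')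
    ((measurableSet_lt measurable_const hg).const_smul_of_ne_zero h1l.ne')
    hfc.smul_set hgc.smul_set ?_
  rintro _ ⟨a, ha, rfl⟩ _ ⟨b, hb, rfl⟩
  calc c = c ^ l * c ^ (1 - l) := (rpow_mul_rpow_one_sub_self hl0.le hl1.le c).symm
    _ < f a ^ l * g b ^ (1 - l) := mul_lt_mul (rpow_lt_rpow ha hl0) (rpow_lt_rpow hb h1l)
    _ ≤ h (l • a + (1 - l) • b) := hfgh a b

theorem prekopa_leindler_of_iSup_eq_one {f g h : ℝ → ℝ≥0∞} (hf : Measurable f)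
    (hg : Measurable g) (hh : Measurable h) {l : ℝ} (hl0 : 0 < l) (hl1 : l < 1)
    (hf1 : ⨆ x, f x = 1) (hg1 : ⨆ x, g x = 1)
    (hfgh : ∀ x y, f x ^ l * g y ^ (1 - l) ≤ h (l * x + (1 - l) * y)) :
    (∫⁻ x, f x) ^ l * (∫⁻ x, g x) ^ (1 - l) ≤ ∫⁻ x, h x := by
  have superlevel_nonempty : ∀ {u : ℝ → ℝ≥0∞}, ⨆ x, u x = 1 → ∀ t ∈ Ioo (0 : ℝ) 1,
      {x | ENNReal.ofReal t < u x}.Nonempty := fun hu t ht => by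
    obtain ⟨x, hx⟩ := lt_iSup_iff.1 (hu ▸ ofReal_lt_one.2 ht.2)
    exact ⟨x, hx⟩
  calc (∫⁻ x, f x) ^ l * (∫⁻ x, g x) ^ (1 - l)
      ≤ ENNReal.ofReal l * (∫⁻ x, f x) + ENNReal.ofReal (1 - l) * ∫⁻ x, g x :=
        rpow_mul_rpow_le_add hl0 hl1 _ _
    _ ≤ ∫⁻ t in Ioo (0 : ℝ) 1, (ENNReal.ofReal l * volume {x | ENNReal.ofReal t < f x}
          + ENNReal.ofReal (1 - l) * volume {x | ENNReal.ofReal t < g x}) := by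
        have hfle : ∀ x, f x ≤ 1 := fun x => hf1 ▸ le_iSup f x
        have hgle : ∀ x, g x ≤ 1 := fun x => hg1 ▸ le_iSup g x
        rw [lintegral_eq_setLIntegral_measure_lt_of_le_one volume hf hfle,
          lintegral_eq_setLIntegral_measure_lt_of_le_one volume hg hgle,
          ← lintegral_const_mul' _ _ ofReal_ne_top, ← lintegral_const_mul' _ _ ofReal_ne_top]
        exact le_lintegral_add _ _
    _ ≤ ∫⁻ t in Ioo (0 : ℝ) 1, volume {x | ENNReal.ofReal t < h x} :=
        setLIntegral_mono' measurableSet_Ioo fun t ht => volume_superlevel_add_le hf hg hl0 hl1 hfgh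
          (superlevel_nonempty hf1 t ht) (superlevel_nonempty hg1 t ht)
    _ = ∫⁻ x, min (h x) 1 := (lintegral_min_one_eq_setLIntegral_measure_lt volume hh).symm
    _ ≤ ∫⁻ x, h x := lintegral_mono fun x => min_le_left _ _

theorem prekopa_leindler {f g h : ℝ → ℝ≥0∞} (hf : Measurable f) (hg : Measurable g)
    (hh : Measurable h) {l : ℝ} (hl0 : 0 < l) (hl1 : l < 1)
    (hfS : ⨆ x, f x ≠ ∞) (hgS : ⨆ x, g x ≠ ∞)
    (hfgh : ∀ x y, f x ^ l * g y ^ (1 - l) ≤ h (l * x + (1 - l) * y)) :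
    (∫⁻ x, f x) ^ l * (∫⁻ x, g x) ^ (1 - l) ≤ ∫⁻ x, h x := by
  have h1l : 0 < 1 - l := by linarith
  set Sf := ⨆ x, f x
  set Sg := ⨆ x, g x
  rcases eq_or_ne Sf 0 with hSf0 | hSf0
  · simp [ENNReal.iSup_eq_zero.1 hSf0, zero_rpow_of_pos hl0]
  rcases eq_or_ne Sg 0 with hSg0 | hSg0
  · simp [ENNReal.iSup_eq_zero.1 hSg0, zero_rpow_of_pos h1l]
  have scale : ∀ c d a b : ℝ≥0∞,
      (c * a) ^ l * (d * b) ^ (1 - l) = c ^ l * d ^ (1 - l) * (a ^ l * b ^ (1 - l)) := by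
    intro c d a b
    rw [mul_rpow_of_nonneg _ _ hl0.le, mul_rpow_of_nonneg _ _ h1l.le]
    ring
  set D := Sf⁻¹ ^ l * Sg⁻¹ ^ (1 - l)
  have hD0 : D ≠ 0 := mul_ne_zero (rpow_pos (by simpa using hfS) (inv_ne_top.2 hSf0)).ne'
    (rpow_pos (by simpa using hgS) (inv_ne_top.2 hSg0)).ne'
  have hDtop : D ≠ ∞ := mul_ne_top (rpow_ne_top_of_nonneg hl0.le (inv_ne_top.2 hSf0))
    (rpow_ne_top_of_nonneg h1l.le (inv_ne_top.2 hSg0))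
  have normalized := prekopa_leindler_of_iSup_eq_one (hf.const_mul Sf⁻¹) (hg.const_mul Sg⁻¹)
    (hh.const_mul D) hl0 hl1 (by rw [← mul_iSup, ENNReal.inv_mul_cancel hSf0 hfS])
    (by rw [← mul_iSup, ENNReal.inv_mul_cancel hSg0 hgS])
    fun x y => (scale _ _ _ _).trans_le (mul_le_mul_right (hfgh x y) D)
  rw [lintegral_const_mul' _ _ (inv_ne_top.2 hSf0), lintegral_const_mul' _ _ (inv_ne_top.2 hSg0),
    lintegral_const_mul' _ _ hDtop, scale] at normalized
  exact (ENNReal.mul_le_mul_iff_right hD0 hDtop).1 normalized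

def IsLogConcave (G : ℝ → ℝ≥0∞) : Prop :=
  ∀ ⦃s t l : ℝ⦄, 0 < l → l < 1 → G s ^ l * G t ^ (1 - l) ≤ G (l * s + (1 - l) * t)

theorem Convex.isLogConcave_indicator_one {S : Set ℝ} (hS : Convex ℝ S) :
    IsLogConcave (S.indicator 1) := by
  intro s t l hl0 hl1
  by_cases hs : s ∈ S
  · by_cases ht : t ∈ S
    · have hm : l * s + (1 - l) * t ∈ S := hS hs ht hl0.le (sub_pos.2 hl1).le (add_sub_cancel l 1)
      simp [indicator_of_mem hs, indicator_of_mem ht, indicator_of_mem hm]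
    · simp [indicator_of_notMem ht, zero_rpow_of_pos (sub_pos.2 hl1)]
  · simp [indicator_of_notMem hs, zero_rpow_of_pos hl0]

theorem IsLogConcave.mul_le_mul {G : ℝ → ℝ≥0∞} (hG : IsLogConcave G) {a b c d : ℝ}
    (hab : a < b) (hac : a < c) (habcd : a + d = b + c) :
    G a * G d ≤ G b * G c := by
  set l := (d - b) / (d - a)
  have hda : 0 < d - a := by linarith
  have hl0 : 0 < l := div_pos (by linarith) hda
  have hl1 : l < 1 := (div_lt_one hda).2 (by linarith)
  have h1l : 0 < 1 - l := sub_pos.2 hl1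
  have hl : l * (d - a) = d - b := div_mul_cancel₀ _ hda.ne'
  have hb : l * a + (1 - l) * d = b := by linear_combination -hl
  have hc : (1 - l) * a + (1 - (1 - l)) * d = c := by linear_combination hl + habcd
  calc G a * G d = (G a ^ l * G a ^ (1 - l)) * (G d ^ l * G d ^ (1 - l)) := by
        rw [rpow_mul_rpow_one_sub_self hl0.le hl1.le, rpow_mul_rpow_one_sub_self hl0.le hl1.le]
    _ = (G a ^ l * G d ^ (1 - l)) * (G a ^ (1 - l) * G d ^ (1 - (1 - l))) := by
        rw [_root_.sub_sub_cancel]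
        ring
    _ ≤ G b * G c := by
        gcongr
        · exact hb ▸ hG hl0 hl1
        · exact hc ▸ hG h1l (by linarith)

section SublevelVolume

variable {k : ℕ}

noncomputable def sublevelVolume (φ : Fin k → ℝ → ℝ) (s : ℝ) : ℝ≥0∞ :=
  volume {w : Fin k → ℝ | ∑ i, φ i (w i) ≤ s}

theorem monotone_sublevelVolume (φ : Fin k → ℝ → ℝ) : Monotone (sublevelVolume φ) :=
  fun _ _ hst => measure_mono fun _ hw => le_trans hw hst

theorem sublevelVolume_ne_top {φ : Fin k → ℝ → ℝ} (h0 : ∀ i x, 0 ≤ φ i x)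
    (hbdd : ∀ i t, Bornology.IsBounded {x | φ i x ≤ t}) (s : ℝ) :
    sublevelVolume φ s ≠ ∞ := by
  have hsub : {w : Fin k → ℝ | ∑ i, φ i (w i) ≤ s} ⊆ univ.pi fun i => {x | φ i x ≤ s} :=
    fun w hw i _ => (Finset.single_le_sum (fun j _ => h0 j (w j)) (Finset.mem_univ i)).trans hw
  refine ne_top_of_le_ne_top ?_ (measure_mono hsub)
  rw [volume_pi_pi]
  exact prod_ne_top fun i _ => (hbdd i s).measure_lt_top.ne

theorem sublevelVolume_fin_zero (φ : Fin 0 → ℝ → ℝ) :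
    sublevelVolume φ = (Ici 0).indicator 1 := by
  ext s
  by_cases hs : 0 ≤ s <;> simp [sublevelVolume, hs, volume_pi]

theorem sublevelVolume_succ {φ : Fin (k + 1) → ℝ → ℝ} (hφ : ∀ i, Measurable (φ i)) (s : ℝ) :
    sublevelVolume φ s = ∫⁻ x, sublevelVolume (fun i => φ i.succ) (s - φ 0 x) := by
  have he := (volume_preserving_piFinSuccAbove (fun _ : Fin (k + 1) => ℝ) 0).symm
  have hS : MeasurableSet {w : Fin (k + 1) → ℝ | ∑ i, φ i (w i) ≤ s} :=
    measurableSet_le (Finset.measurable_sum _ fun i _ => (hφ i).comp (measurable_pi_apply i))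
      measurable_const
  rw [sublevelVolume, ← he.measure_preimage hS.nullMeasurableSet, Measure.volume_eq_prod,
    Measure.prod_apply (he.measurable hS)]
  congr 1 with x
  congr 1 with w
  simp [Fin.sum_univ_succ, Fin.insertNthEquiv, Fin.insertNth_zero', le_sub_iff_add_le']

theorem isLogConcave_sublevelVolume {φ : Fin k → ℝ → ℝ} (hconv : ∀ i, ConvexOn ℝ univ (φ i))
    (h0 : ∀ i x, 0 ≤ φ i x) (hbdd : ∀ i t, Bornology.IsBounded {x | φ i x ≤ t}) :
    IsLogConcave (sublevelVolume φ) := by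
  induction k with
  | zero => exact sublevelVolume_fin_zero φ ▸ (convex_Ici 0).isLogConcave_indicator_one
  | succ k ih =>
    intro s t l hl0 hl1
    have h1l : 0 < 1 - l := sub_pos.2 hl1
    have hφ : ∀ i, Measurable (φ i) := fun i =>
      (continuousOn_univ.1 ((hconv i).continuousOn isOpen_univ)).measurable
    set G := sublevelVolume fun i : Fin k => φ i.succ
    have hG : IsLogConcave G := ih (fun i => hconv i.succ) (fun i => h0 i.succ) fun i => hbdd i.succ
    have hGmono : Monotone G := monotone_sublevelVolume _
    have hsup : ∀ r, ⨆ x, G (r - φ 0 x) ≠ ∞ := fun r =>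
      ne_top_of_le_ne_top (sublevelVolume_ne_top (fun i => h0 i.succ) (fun i => hbdd i.succ) r)
        (iSup_le fun x => hGmono (by linarith [h0 0 x]))
    have hmeas : ∀ r, Measurable fun x => G (r - φ 0 x) := fun r =>
      hGmono.measurable.comp (measurable_const.sub (hφ 0))
    rw [sublevelVolume_succ hφ, sublevelVolume_succ hφ, sublevelVolume_succ hφ]
    refine prekopa_leindler (hmeas s) (hmeas t) (hmeas _) hl0 hl1 (hsup s) (hsup t) fun x y => ?_
    have hφ0 : φ 0 (l * x + (1 - l) * y) ≤ l * φ 0 x + (1 - l) * φ 0 y := by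
      simpa using (hconv 0).2 (mem_univ x) (mem_univ y) hl0.le h1l.le (add_sub_cancel l 1)
    exact (hG hl0 hl1).trans (hGmono (by nlinarith))

end SublevelVolume

theorem ConvexOn.comp_abs {f : ℝ → ℝ} (hf : ConvexOn ℝ (Ici 0) f) (hmono : MonotoneOn f (Ici 0)) :
    ConvexOn ℝ univ fun x => f |x| := by
  have himage : (|·|) '' (univ : Set ℝ) = Ici 0 := by
    ext y
    exact ⟨fun ⟨x, _, hx⟩ => hx ▸ abs_nonneg x, fun hy => ⟨y, mem_univ y, abs_of_nonneg hy⟩⟩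
  exact (himage ▸ hf).comp (convexOn_univ_norm : ConvexOn ℝ univ (|·|)) (himage ▸ hmono)

theorem ConvexOn.isBounded_setOf_comp_abs_le {f : ℝ → ℝ} (hf : ConvexOn ℝ (Ici 0) f)
    (hmono : StrictMonoOn f (Ici 0)) (h0 : f 0 = 0) (t : ℝ) :
    Bornology.IsBounded {x : ℝ | f |x| ≤ t} := by
  have hf1 : 0 < f 1 := h0 ▸ hmono self_mem_Ici (mem_Ici.2 zero_le_one) zero_lt_one
  refine (Metric.isBounded_Icc (-max 1 (t / f 1)) (max 1 (t / f 1))).subset fun x hx => ?_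
  rw [mem_Icc, ← abs_le]
  rcases le_or_gt |x| 1 with hx1 | hx1
  · exact hx1.trans (le_max_left _ _)
  -- the secant slope `f |x| / |x|` of a convex function vanishing at `0` is at least `f 1`
  have hsecant := hf.secant_mono_aux1 self_mem_Ici (mem_Ici.2 (abs_nonneg x)) zero_lt_one hx1
  rw [h0] at hsecant
  refine ((le_div_iff₀ hf1).2 ?_).trans (le_max_right _ _)
  linarith [hx.out]

theorem orlicz_section_ineq (k : ℕ) (F : Fin (k + 2) → ℝ → ℝ)
    (hconv : ∀ i, ConvexOn ℝ (Set.Ici 0) (F i))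
    (hmono : ∀ i, StrictMonoOn (F i) (Set.Ici 0))
    (h0 : ∀ i, F i 0 = 0)
    (m : ℝ → ℝ → ℝ)
    (hm : ∀ y z, m y z =
      (volume {w : Fin k → ℝ |
        ∑ i, F i |(Fin.cons y (Fin.cons z w) : Fin (k + 2) → ℝ) i| ≤ 1}).toReal)
    (y y' z z' : ℝ) (hy' : 0 < y') (hy : y' < y) (hz' : 0 < z') (hz : z' < z) :
    m y z * m y' z' ≤ m y z' * m y' z := by
  set ψ : Fin k → ℝ → ℝ := fun i x => F i.succ.succ |x|
  have hψ0 : ∀ i x, 0 ≤ ψ i x := fun i x =>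
    h0 i.succ.succ ▸ (hmono _).monotoneOn self_mem_Ici (abs_nonneg x) (abs_nonneg x)
  have hψbdd : ∀ i t, Bornology.IsBounded {x | ψ i x ≤ t} := fun i =>
    (hconv _).isBounded_setOf_comp_abs_le (hmono _) (h0 _)
  have hV : IsLogConcave (sublevelVolume ψ) := isLogConcave_sublevelVolume
    (fun i => (hconv _).comp_abs (hmono _).monotoneOn) hψ0 hψbdd
  have hmV : ∀ u v, m u v = (sublevelVolume ψ (1 - F 0 |u| - F 1 |v|)).toReal := by
    intro u v
    rw [hm, sublevelVolume]
    congr 2 with w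
    simp only [mem_ofPred_eq, Fin.sum_univ_succ, Fin.cons_zero, Fin.cons_succ,
      Fin.succ_zero_eq_one, ψ]
    constructor <;> intro <;> linarith
  have hFy : F 0 |y'| < F 0 |y| := by
    rw [abs_of_pos hy', abs_of_pos (hy'.trans hy)]
    exact hmono 0 hy'.le (hy'.trans hy).le hy
  have hFz : F 1 |z'| < F 1 |z| := by
    rw [abs_of_pos hz', abs_of_pos (hz'.trans hz)]
    exact hmono 1 hz'.le (hz'.trans hz).le hz
  simp only [hmV, ← toReal_mul]
  exact toReal_mono (mul_ne_top (sublevelVolume_ne_top hψ0 hψbdd _)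
    (sublevelVolume_ne_top hψ0 hψbdd _)) (hV.mul_le_mul (by linarith) (by linarith) (by ring))
end

section
/- Let X be a real random variable with an even, log-concave density. Then E(X⁴) ≤ 6 (E(X²))². -/
/-!
Let `Γ(s) = ∫_s^∞ h` be the upper tail of the density. Log-concavity of `h` makes `Γ`
log-concave, in the form `Γ(0) Γ(s + t) ≤ Γ(s) Γ(t)` for `s, t ≥ 0`, and `Γ(0) = 1/2` by symmetry.
By Tonelli over the triangle `0 < s < v`, `E X² = 4 ∫_0^∞ s Γ(s) ds` and
`E X⁴ = 8 ∫_0^∞ s³ Γ(s) ds`, while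
`(∫_0^∞ s Γ(s) ds)² = ∫∫ s t Γ(s) Γ(t) ≥ ½ ∫∫ s t Γ(s + t) = ½ ∫_0^∞ (v³ / 6) Γ(v) dv`.
Hence `E X⁴ ≤ 8 · 12 (∫_0^∞ s Γ(s) ds)² = 6 (E X²)²`.
-/

open MeasureTheory Set
open scoped ENNReal

theorem mul_le_mul_shift_of_logConcave {h : ℝ → ℝ} (hnn : ∀ t, 0 ≤ h t)
    (hlc : ∀ x y t : ℝ, 0 ≤ t → t ≤ 1 → h x ^ t * h y ^ (1 - t) ≤ h (t * x + (1 - t) * y))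
    {a b t : ℝ} (ht : 0 ≤ t) (hab : a + t ≤ b) :
    h a * h b ≤ h (a + t) * h (b - t) := by
  rcases ht.eq_or_lt with rfl | ht
  · simp
  have hba : 0 < b - a := by linarith
  set l := (b - a - t) / (b - a) with hl
  have hl0 : 0 ≤ l := div_nonneg (by linarith) hba.le
  have hl1 : l ≤ 1 := div_le_one_of_le₀ (by linarith) hba.le
  have hleft := hlc a b l hl0 hl1
  have hright := hlc a b (1 - l) (by linarith) (by linarith)
  rw [show l * a + (1 - l) * b = a + t by rw [hl]; field_simp; ring] at hleft
  rw [show (1 - l) * a + (1 - (1 - l)) * b = b - t by rw [hl]; field_simp; ring,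
    sub_sub_cancel] at hright
  have hsplit : ∀ x : ℝ, 0 ≤ x → x ^ l * x ^ (1 - l) = x := fun x hx => by
    rw [← Real.rpow_add' hx (by simp), add_sub_cancel, Real.rpow_one]
  calc h a * h b = (h a ^ l * h a ^ (1 - l)) * (h b ^ l * h b ^ (1 - l)) := by
        rw [hsplit _ (hnn a), hsplit _ (hnn b)]
    _ = (h a ^ l * h b ^ (1 - l)) * (h a ^ (1 - l) * h b ^ l) := by ring
    _ ≤ h (a + t) * h (b - t) := mul_le_mul hleft hright
      (mul_nonneg (Real.rpow_nonneg (hnn a) _) (Real.rpow_nonneg (hnn b) _)) (hnn _)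

theorem setLIntegral_comp_add_right (f : ℝ → ℝ≥0∞) (c : ℝ) (s : Set ℝ) :
    ∫⁻ x in s, f (x + c) = ∫⁻ y in (· + c) '' s, f y :=
  (measurePreserving_add_right volume c).setLIntegral_comp_emb (measurableEmbedding_addRight c) f s

theorem lintegral_Ioi_comp_add_left (f : ℝ → ℝ≥0∞) (s : ℝ) :
    ∫⁻ t in Ioi 0, f (s + t) = ∫⁻ v in Ioi s, f v := by
  simpa [add_comm] using setLIntegral_comp_add_right f s (Ioi 0)

theorem lintegral_eq_two_mul_setLIntegral_Ioi_of_even {f : ℝ → ℝ≥0∞} (hf : ∀ x, f (-x) = f x) :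
    ∫⁻ x, f x = 2 * ∫⁻ x in Ioi 0, f x := by
  have hneg : ∫⁻ x in Iio 0, f x = ∫⁻ x in Ioi 0, f x := by
    rw [← neg_zero, ← image_neg_Ioi, ← (Measure.measurePreserving_neg volume).setLIntegral_comp_emb
      measurableEmbedding_neg]
    simp_rw [hf, neg_zero]
  rw [← lintegral_add_compl f measurableSet_Iio, compl_Iio, hneg,
    setLIntegral_congr Ioi_ae_eq_Ici.symm, two_mul]

theorem lintegral_Ioo_ofReal_eq_intervalIntegral {f : ℝ → ℝ} (hf : Continuous f) {a b : ℝ}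
    (hab : a ≤ b) (hnn : ∀ x ∈ Ioo a b, 0 ≤ f x) :
    ∫⁻ x in Ioo a b, ENNReal.ofReal (f x) = ENNReal.ofReal (∫ x in a..b, f x) := by
  rw [intervalIntegral.integral_of_le hab, integral_Ioc_eq_integral_Ioo,
    ofReal_integral_eq_lintegral_ofReal ((hf.integrableOn_Icc).mono_set Ioo_subset_Icc_self)
      ((ae_restrict_iff' measurableSet_Ioo).2 (ae_of_all _ hnn))]

theorem lintegral_Ioi_lintegral_Ioi_swap {F : ℝ → ℝ → ℝ≥0∞}
    (hF : Measurable (Function.uncurry F)) :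
    ∫⁻ s in Ioi 0, ∫⁻ v in Ioi s, F s v = ∫⁻ v in Ioi 0, ∫⁻ s in Ioo 0 v, F s v := by
  set T : Set (ℝ × ℝ) := {p | 0 < p.1 ∧ p.1 < p.2}
  have hT : MeasurableSet T := (measurableSet_lt measurable_const measurable_fst).inter
    (measurableSet_lt measurable_fst measurable_snd)
  calc ∫⁻ s in Ioi 0, ∫⁻ v in Ioi s, F s v
      = ∫⁻ s, ∫⁻ v, T.indicator (Function.uncurry F) (s, v) := by
        rw [← lintegral_indicator measurableSet_Ioi]
        congr with s
        by_cases hs : s ∈ Ioi 0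
        · rw [indicator_of_mem hs, ← lintegral_indicator measurableSet_Ioi]
          congr with v
          simp_all [T, indicator_apply]
        · simp_all [T]
    _ = ∫⁻ v, ∫⁻ s, T.indicator (Function.uncurry F) (s, v) :=
        lintegral_lintegral_swap (hF.indicator hT).aemeasurable
    _ = ∫⁻ v in Ioi 0, ∫⁻ s in Ioo 0 v, F s v := by
        rw [← lintegral_indicator measurableSet_Ioi]
        congr with v
        by_cases hv : v ∈ Ioi 0
        · rw [indicator_of_mem hv, ← lintegral_indicator measurableSet_Ioo]
          congr
        · have : ∀ s, ¬(0 < s ∧ s < v) := fun s hs => hv (hs.1.trans hs.2)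
          simp [hv, T, this]

noncomputable def upperTail (H : ℝ → ℝ≥0∞) (s : ℝ) : ℝ≥0∞ := ∫⁻ x in Ioi s, H x

namespace upperTail

variable {H : ℝ → ℝ≥0∞}

theorem antitone : Antitone (upperTail H) := fun _ _ hst =>
  lintegral_mono_set (Ioi_subset_Ioi hst)

theorem measurable : Measurable (upperTail H) := upperTail.antitone.measurable

theorem eq_lintegral_Ioc_add {r s : ℝ} (hrs : r ≤ s) :
    upperTail H r = (∫⁻ x in Ioc r s, H x) + upperTail H s := by
  rw [upperTail, upperTail, ← Ioc_union_Ioi_eq_Ioi hrs,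
    lintegral_union measurableSet_Ioi Ioc_disjoint_Ioi_same]

theorem mul_le_mul_shift (hH : Measurable H)
    (hshift : ∀ a b t, 0 ≤ t → a + t ≤ b → H a * H b ≤ H (a + t) * H (b - t))
    {r s t : ℝ} (hrs : r ≤ s) (ht : 0 ≤ t) :
    upperTail H r * upperTail H (s + t) ≤ upperTail H s * upperTail H (r + t) := by
  have hstep : ∀ a ≤ s, H a * upperTail H (s + t) ≤ H (a + t) * upperTail H s := by
    intro a has
    calc H a * upperTail H (s + t) = ∫⁻ b in Ioi (s + t), H a * H b :=
          (lintegral_const_mul _ hH).symm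
      _ ≤ ∫⁻ b in Ioi (s + t), H (a + t) * H (b - t) :=
          setLIntegral_mono' measurableSet_Ioi fun b hb =>
            hshift a b t ht (by linarith [mem_Ioi.1 hb])
      _ = H (a + t) * upperTail H s := by
          rw [lintegral_const_mul _ (by fun_prop)]
          simp [upperTail, sub_eq_add_neg, setLIntegral_comp_add_right]
  calc upperTail H r * upperTail H (s + t)
      = (∫⁻ a in Ioc r s, H a * upperTail H (s + t)) + upperTail H s * upperTail H (s + t) := by
        rw [eq_lintegral_Ioc_add hrs, _root_.add_mul, lintegral_mul_const _ hH]
    _ ≤ (∫⁻ a in Ioc r s, H (a + t) * upperTail H s) + upperTail H s * upperTail H (s + t) :=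
        add_le_add_left (setLIntegral_mono' measurableSet_Ioc fun a ha => hstep a ha.2) _
    _ = upperTail H s * upperTail H (r + t) := by
        rw [lintegral_mul_const _ (by fun_prop), setLIntegral_comp_add_right, image_add_const_Ioc,
          mul_comm, ← _root_.mul_add, eq_lintegral_Ioc_add (by linarith : r + t ≤ s + t)]

theorem lintegral_Ioi_pow_succ_mul (hH : Measurable H) (n : ℕ) :
    ∫⁻ v in Ioi 0, ENNReal.ofReal (v ^ (n + 1)) * H v
      = (n + 1) * ∫⁻ s in Ioi 0, ENNReal.ofReal (s ^ n) * upperTail H s := by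
  have hIoo : ∀ v ∈ Ioi (0 : ℝ), ∫⁻ s in Ioo 0 v, ENNReal.ofReal ((n + 1) * s ^ n)
      = ENNReal.ofReal (v ^ (n + 1)) := fun v hv => by
    rw [lintegral_Ioo_ofReal_eq_intervalIntegral (by fun_prop) (le_of_lt hv)
      (fun s hs => by have := hs.1.le; positivity), intervalIntegral.integral_const_mul,
      integral_pow]
    field_simp
    simp
  have hcoeff : ∀ s : ℝ, ENNReal.ofReal ((n + 1) * s ^ n) = (n + 1) * ENNReal.ofReal (s ^ n) :=
    fun s => by
      rw [ENNReal.ofReal_mul (by positivity)]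
      norm_cast
  symm
  calc (n + 1) * ∫⁻ s in Ioi 0, ENNReal.ofReal (s ^ n) * upperTail H s
      = ∫⁻ s in Ioi 0, ∫⁻ v in Ioi s, ENNReal.ofReal ((n + 1) * s ^ n) * H v := by
        rw [← lintegral_const_mul' _ _ (by simp)]
        refine lintegral_congr fun s => ?_
        rw [upperTail, lintegral_const_mul _ hH, hcoeff, mul_assoc]
    _ = ∫⁻ v in Ioi 0, ∫⁻ s in Ioo 0 v, ENNReal.ofReal ((n + 1) * s ^ n) * H v :=
        lintegral_Ioi_lintegral_Ioi_swap (by fun_prop)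
    _ = ∫⁻ v in Ioi 0, ENNReal.ofReal (v ^ (n + 1)) * H v := by
        refine setLIntegral_congr_fun measurableSet_Ioi fun v hv => ?_
        rw [lintegral_mul_const _ (by fun_prop), hIoo v hv]

end upperTail

theorem lintegral_Ioi_pow_three_mul_le {G : ℝ → ℝ≥0∞} (hG : Measurable G) {c : ℝ≥0∞}
    (hc : ∀ s t, 0 < s → 0 < t → G (s + t) ≤ c * (G s * G t)) :
    ∫⁻ v in Ioi 0, ENNReal.ofReal (v ^ 3) * G v
      ≤ 6 * c * (∫⁻ s in Ioi 0, ENNReal.ofReal s * G s) ^ 2 := by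
  have hIoo : ∀ v ∈ Ioi (0 : ℝ), ∫⁻ s in Ioo 0 v, ENNReal.ofReal (6 * s * (v - s))
      = ENNReal.ofReal (v ^ 3) := fun v hv => by
    have hint : ∀ (a : ℝ) (n : ℕ), IntervalIntegrable (fun s : ℝ => a * s ^ n) volume 0 v :=
      fun a n => (continuous_const.mul (continuous_pow n)).intervalIntegrable _ _
    rw [lintegral_Ioo_ofReal_eq_intervalIntegral (by fun_prop) (le_of_lt hv)
      (fun s hs => by have := hs.1.le; have := sub_nonneg.2 hs.2.le; positivity)]
    calc ENNReal.ofReal (∫ s in (0 : ℝ)..v, 6 * s * (v - s))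
        = ENNReal.ofReal (∫ s in (0 : ℝ)..v, 6 * v * s ^ 1 - 6 * s ^ 2) := by
          congr with s; ring
      _ = ENNReal.ofReal (v ^ 3) := by
          rw [intervalIntegral.integral_sub (hint _ _) (hint _ _),
            intervalIntegral.integral_const_mul, intervalIntegral.integral_const_mul,
            integral_pow, integral_pow]
          ring_nf
  set C := ∫⁻ s in Ioi 0, ENNReal.ofReal s * G s
  have hinner : ∀ s, ∫⁻ t in Ioi 0, ENNReal.ofReal t * (c * (G s * G t)) = c * G s * C :=
    fun s => by
      rw [← lintegral_const_mul _ (by fun_prop)]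
      congr with t
      ring
  calc ∫⁻ v in Ioi 0, ENNReal.ofReal (v ^ 3) * G v
      = ∫⁻ v in Ioi 0, ∫⁻ s in Ioo 0 v, ENNReal.ofReal (6 * s * (v - s)) * G v :=
        setLIntegral_congr_fun measurableSet_Ioi fun v hv => by
          rw [lintegral_mul_const _ (by fun_prop), hIoo v hv]
    _ = ∫⁻ s in Ioi 0, ∫⁻ v in Ioi s, ENNReal.ofReal (6 * s * (v - s)) * G v :=
        (lintegral_Ioi_lintegral_Ioi_swap (by fun_prop)).symm
    _ = ∫⁻ s in Ioi 0, 6 * ENNReal.ofReal s * ∫⁻ t in Ioi 0, ENNReal.ofReal t * G (s + t) := by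
        refine setLIntegral_congr_fun measurableSet_Ioi fun s hs => ?_
        rw [← lintegral_const_mul _ (by fun_prop), ← lintegral_Ioi_comp_add_left]
        refine setLIntegral_congr_fun measurableSet_Ioi fun t ht => ?_
        rw [add_sub_cancel_left, ENNReal.ofReal_mul (mul_nonneg (by norm_num) (le_of_lt hs)),
          ENNReal.ofReal_mul (by norm_num), ENNReal.ofReal_ofNat]
        ring
    _ ≤ ∫⁻ s in Ioi 0, 6 * ENNReal.ofReal s *
          ∫⁻ t in Ioi 0, ENNReal.ofReal t * (c * (G s * G t)) := by
        refine setLIntegral_mono' measurableSet_Ioi fun s hs => ?_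
        gcongr 6 * ENNReal.ofReal s * ?_
        exact setLIntegral_mono' measurableSet_Ioi fun t ht => by
          gcongr ENNReal.ofReal t * ?_
          exact hc s t hs ht
    _ = ∫⁻ s in Ioi 0, ENNReal.ofReal s * G s * (6 * c * C) := by
        simp_rw [hinner]
        congr with s
        ring
    _ = 6 * c * C ^ 2 := by
        rw [lintegral_mul_const _ (by fun_prop)]
        ring

section EvenLogConcave

variable {h : ℝ → ℝ}

theorem lintegral_ofReal_pow_mul_eq_upperTail (hmeas : Measurable h) (heven : ∀ t, h (-t) = h t)
    {n : ℕ} (hn : Even (n + 1)) :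
    ∫⁻ t, ENNReal.ofReal (t ^ (n + 1) * h t)
      = 2 * (n + 1) *
          ∫⁻ s in Ioi 0, ENNReal.ofReal (s ^ n) * upperTail (fun x => ENNReal.ofReal (h x)) s := by
  rw [lintegral_eq_two_mul_setLIntegral_Ioi_of_even fun t => by rw [hn.neg_pow, heven], mul_assoc,
    ← upperTail.lintegral_Ioi_pow_succ_mul hmeas.ennreal_ofReal]
  simp_rw [ENNReal.ofReal_mul (hn.pow_nonneg _)]

theorem lintegral_pow_four_le_of_logConcave (hnn : ∀ t, 0 ≤ h t) (heven : ∀ t, h (-t) = h t)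
    (hlc : ∀ x y t : ℝ, 0 ≤ t → t ≤ 1 → h x ^ t * h y ^ (1 - t) ≤ h (t * x + (1 - t) * y))
    (hmeas : Measurable h) (hmass : ∫⁻ t, ENNReal.ofReal (h t) = 1) :
    ∫⁻ t, ENNReal.ofReal (t ^ 4 * h t) ≤ 6 * (∫⁻ t, ENNReal.ofReal (t ^ 2 * h t)) ^ 2 := by
  set H := fun x => ENNReal.ofReal (h x)
  have hH : Measurable H := hmeas.ennreal_ofReal
  have hshift : ∀ a b t, 0 ≤ t → a + t ≤ b → H a * H b ≤ H (a + t) * H (b - t) :=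
    fun a b t ht hab => by
      simp only [H, ← ENNReal.ofReal_mul (hnn _)]
      exact ENNReal.ofReal_le_ofReal (mul_le_mul_shift_of_logConcave hnn hlc ht hab)
  have htail : 2 * upperTail H 0 = 1 := by
    rw [← hmass, lintegral_eq_two_mul_setLIntegral_Ioi_of_even fun t => by rw [heven]]
    rfl
  have hsuper : ∀ s t, 0 < s → 0 < t →
      upperTail H (s + t) ≤ 2 * (upperTail H s * upperTail H t) := fun s t hs ht => by
    calc upperTail H (s + t) = 2 * (upperTail H 0 * upperTail H (s + t)) := by
          rw [← mul_assoc, htail, one_mul]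
      _ ≤ 2 * (upperTail H s * upperTail H t) := by
          gcongr 2 * ?_
          simpa using upperTail.mul_le_mul_shift hH hshift (r := 0) hs.le ht.le
  have h4 : ∫⁻ t, ENNReal.ofReal (t ^ 4 * h t) = _ :=
    lintegral_ofReal_pow_mul_eq_upperTail (n := 3) hmeas heven (by decide)
  have h2 : ∫⁻ t, ENNReal.ofReal (t ^ 2 * h t) = _ :=
    lintegral_ofReal_pow_mul_eq_upperTail (n := 1) hmeas heven (by decide)
  rw [h4, h2]
  calc 2 * ((3 : ℕ) + 1) * ∫⁻ s in Ioi 0, ENNReal.ofReal (s ^ 3) * upperTail H s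
      ≤ 2 * ((3 : ℕ) + 1) * (6 * 2 * (∫⁻ s in Ioi 0, ENNReal.ofReal s * upperTail H s) ^ 2) := by
        gcongr
        exact lintegral_Ioi_pow_three_mul_le upperTail.measurable hsuper
    _ = 6 * (2 * ((1 : ℕ) + 1) * ∫⁻ s in Ioi 0, ENNReal.ofReal (s ^ 1) * upperTail H s) ^ 2 := by
        norm_num
        ring

end EvenLogConcave

theorem fourth_moment_le_of_even_logconcave_general (h : ℝ → ℝ)
    (hnn : ∀ t, 0 ≤ h t) (heven : ∀ t, h (-t) = h t)
    (hlc : ∀ x y t : ℝ, 0 ≤ t → t ≤ 1 →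
      h x ^ t * h y ^ (1 - t) ≤ h (t * x + (1 - t) * y))
    (hmeas : Measurable h) (hprob : ∫ t, h t = 1) :
    ∫ t, t ^ 4 * h t ≤ 6 * (∫ t, t ^ 2 * h t) ^ 2 := by
  have hmass : ∫⁻ t, ENNReal.ofReal (h t) = 1 := by
    rw [← ofReal_integral_eq_lintegral_ofReal (integrable_of_integral_eq_one hprob)
      (ae_of_all _ hnn), hprob, ENNReal.ofReal_one]
  have hmoment {n : ℕ} (hn : Even n) :
      ∫ t, t ^ n * h t = (∫⁻ t, ENNReal.ofReal (t ^ n * h t)).toReal :=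
    integral_eq_lintegral_of_nonneg_ae (ae_of_all _ fun t => mul_nonneg (hn.pow_nonneg t) (hnn t))
      (by fun_prop)
  rw [hmoment (by decide), hmoment (by decide)]
  set M₂ := ∫⁻ t, ENNReal.ofReal (t ^ 2 * h t)
  set M₄ := ∫⁻ t, ENNReal.ofReal (t ^ 4 * h t)
  have hM₂ : M₂ ≤ 1 + M₄ := by
    rw [← hmass, ← lintegral_add_left hmeas.ennreal_ofReal]
    refine lintegral_mono fun t => ?_
    rw [← ENNReal.ofReal_add (hnn t) (mul_nonneg (by positivity) (hnn t))]
    exact ENNReal.ofReal_le_ofReal (by nlinarith [hnn t, sq_nonneg (t ^ 2 - 1)])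
  rcases eq_or_ne M₄ ⊤ with hM₄ | hM₄
  -- then `∫ t, t ^ 4 * h t` is the junk value `0`
  · rw [hM₄, ENNReal.toReal_top]
    positivity
  · have := ne_top_of_le_ne_top (by finiteness) hM₂
    calc M₄.toReal ≤ (6 * M₂ ^ 2).toReal :=
          ENNReal.toReal_mono (by finiteness)
            (lintegral_pow_four_le_of_logConcave hnn heven hlc hmeas hmass)
      _ = 6 * M₂.toReal ^ 2 := by simp [ENNReal.toReal_mul, ENNReal.toReal_pow]

theorem fourth_moment_le_of_even_logconcave (h : ℝ → ℝ)
    (hnn : ∀ t, 0 ≤ h t) (heven : ∀ t, h (-t) = h t)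
    (hlc : ∀ x y t : ℝ, 0 ≤ t → t ≤ 1 →
      h x ^ t * h y ^ (1 - t) ≤ h (t * x + (1 - t) * y))
    (hmeas : Measurable h) (hprob : ∫ t, h t = 1)
    (hint : Integrable (fun t => t ^ 4 * h t)) :
    ∫ t, t ^ 4 * h t ≤ 6 * (∫ t, t ^ 2 * h t) ^ 2 :=
  fourth_moment_le_of_even_logconcave_general h hnn heven hlc hmeas hprob
end

section
/- Let K ⊂ ℝ³ be the unit ball of ‖(x,y,z)‖ = |x| + max{|y|,|z|}, with section function m(y,z) = 2(1 − max{|y|,|z|})₊. Then for all 1 ≥ y > ȳ > 0 and y ≥ z > z̄ > 0: m(y,z̄)·m(ȳ,z) − m(y,z)·m(ȳ,z̄) = 4(1−y)(max{ȳ,z̄} − max{ȳ,z}) ≤ 0, with strict inequality when y < 1 and z > ȳ. -/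
theorem counterexample_section_ineq (m : ℝ → ℝ → ℝ)
    (hm : ∀ y z, m y z = 2 * max 0 (1 - max |y| |z|))
    (y y' z z' : ℝ) (hy1 : y ≤ 1) (hy' : 0 < y') (hy : y' < y)
    (hz' : 0 < z') (hz : z' < z) (hzy : z ≤ y) :
    m y z' * m y' z - m y z * m y' z' =
      4 * (1 - y) * (max y' z' - max y' z) ∧
    m y z' * m y' z - m y z * m y' z' ≤ 0 ∧
    (y < 1 → y' < z → m y z' * m y' z - m y z * m y' z' < 0) := by
  have hy0 : 0 < y := lt_trans hy' hy
  have hz0 : 0 < z := lt_trans hz' hz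
  have hay : |y| = y := abs_of_pos hy0
  have hay' : |y'| = y' := abs_of_pos hy'
  have haz : |z| = z := abs_of_pos hz0
  have haz' : |z'| = z' := abs_of_pos hz'
  have h1 : max |y| |z| = y := by rw [hay, haz]; exact max_eq_left hzy
  have h2 : max |y| |z'| = y := by
    rw [hay, haz']; exact max_eq_left (le_of_lt (lt_of_lt_of_le hz hzy))
  have hmyz : m y z = 2 * (1 - y) := by
    rw [hm, h1, max_eq_right (by linarith)]
  have hmyz' : m y z' = 2 * (1 - y) := by
    rw [hm, h2, max_eq_right (by linarith)]
  have hmax1 : max y' z ≤ 1 := max_le (by linarith) (by linarith)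
  have hmax2 : max y' z' ≤ 1 := max_le (by linarith) (by linarith)
  have hm1 : m y' z = 2 * (1 - max y' z) := by
    rw [hm, hay', haz, max_eq_right (by linarith)]
  have hm2 : m y' z' = 2 * (1 - max y' z') := by
    rw [hm, hay', haz', max_eq_right (by linarith)]
  have hkey : m y z' * m y' z - m y z * m y' z' =
      4 * (1 - y) * (max y' z' - max y' z) := by
    rw [hmyz, hmyz', hm1, hm2]; ring
  have hmono : max y' z' ≤ max y' z := max_le_max le_rfl (le_of_lt hz)
  refine ⟨hkey, ?_, ?_⟩
  · rw [hkey]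
    have : (0:ℝ) ≤ 1 - y := by linarith
    nlinarith
  · intro h1y h2y
    rw [hkey]
    have hlt : max y' z' < max y' z := by
      rw [max_eq_right (le_of_lt h2y)]
      exact max_lt (by linarith) (by linarith)
    nlinarith
end

section
/- Let K ⊂ ℝ³ be the normalized ball of ‖(x,y,z)‖ = |x| + max{|y|,|z|} (rescaled to have volume 1), and let (X,Y,Z) be uniform on it. Then cov(Y², Z²) > 0, i.e. E(Y²Z²) > E(Y²)·E(Z²). In particular the square negative correlation property fails for 1-symmetric convex bodies. -/
/-!
The slice of `K` at height `x` is the square `[-s, s]²` with `s = r - |x|`, so by Fubini the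
moments factor: `∫_K y^n z^m = ∫_{-r}^{r} (2 s^(n+1)/(n+1)) (2 s^(m+1)/(m+1)) dx`. This gives
`vol K = 8r³/3`, `∫_K y² = ∫_K z² = 8r⁵/15` and `∫_K y²z² = 8r⁷/63`. Under `8r³/3 = 1` the product
of the second moments is `64r¹⁰/225 = 8r⁷/75 < 8r⁷/63`.
-/

open MeasureTheory Set

def squareBipyramid (r : ℝ) : Set (ℝ × ℝ × ℝ) := {p | |p.1| + max |p.2.1| |p.2.2| ≤ r}

theorem isCompact_squareBipyramid (r : ℝ) : IsCompact (squareBipyramid r) := by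
  have hsub : squareBipyramid r ⊆ Icc (-r) r ×ˢ Icc (-r) r ×ˢ Icc (-r) r := by
    rintro ⟨x, y, z⟩ (hp : |x| + max |y| |z| ≤ r)
    simp only [mem_prod, mem_Icc, ← abs_le]
    refine ⟨?_, ?_, ?_⟩ <;>
      linarith [abs_nonneg x, abs_nonneg y, le_max_left |y| |z|, le_max_right |y| |z|]
  exact (isCompact_Icc.prod (isCompact_Icc.prod isCompact_Icc)).of_isClosed_subset
    (isClosed_le (by fun_prop) continuous_const) hsub

theorem mk_mem_squareBipyramid_iff {r x : ℝ} {q : ℝ × ℝ} :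
    (x, q) ∈ squareBipyramid r ↔
      q ∈ Icc (-(r - |x|)) (r - |x|) ×ˢ Icc (-(r - |x|)) (r - |x|) := by
  rw [mem_prod, mem_Icc, mem_Icc, ← abs_le, ← abs_le, ← max_le_iff, le_sub_iff_add_le']
  rfl

theorem setIntegral_squareBipyramid_mul {f g : ℝ → ℝ} (hf : Continuous f) (hg : Continuous g)
    (r : ℝ) :
    ∫ p in squareBipyramid r, f p.2.1 * g p.2.2 =
      ∫ x, (∫ y in Icc (-(r - |x|)) (r - |x|), f y) * ∫ z in Icc (-(r - |x|)) (r - |x|), g z := by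
  have hmeas : MeasurableSet (squareBipyramid r) :=
    (isCompact_squareBipyramid r).isClosed.measurableSet
  have hint : IntegrableOn (fun p : ℝ × ℝ × ℝ => f p.2.1 * g p.2.2) (squareBipyramid r) :=
    ContinuousOn.integrableOn_compact (isCompact_squareBipyramid r) (by fun_prop)
  rw [← integral_indicator hmeas, Measure.volume_eq_prod,
    integral_prod _ (hint.integrable_indicator hmeas)]
  congr 1 with x
  have hslice :
      (fun q : ℝ × ℝ => (squareBipyramid r).indicator (fun p => f p.2.1 * g p.2.2) (x, q)) =
        (Icc (-(r - |x|)) (r - |x|) ×ˢ Icc (-(r - |x|)) (r - |x|)).indicator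
          (fun q => f q.1 * g q.2) := by
    ext q
    simp only [indicator, mk_mem_squareBipyramid_iff]
  rw [hslice, integral_indicator (measurableSet_Icc.prod measurableSet_Icc),
    Measure.volume_eq_prod]
  exact setIntegral_prod_mul f g _ _

theorem integral_Icc_neg_pow_of_even {n : ℕ} (hn : Even n) {s : ℝ} (hs : 0 ≤ s) :
    ∫ y in Icc (-s) s, y ^ n = 2 * s ^ (n + 1) / (n + 1) := by
  rw [integral_Icc_eq_integral_Ioc, ← intervalIntegral.integral_of_le (by linarith),
    integral_pow, (hn.add_one).neg_pow]
  ring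

theorem intervalIntegral_sub_abs_pow (k : ℕ) {r : ℝ} (hr : 0 ≤ r) :
    ∫ x in (-r)..r, (r - |x|) ^ k = 2 * r ^ (k + 1) / (k + 1) := by
  have hcont : Continuous fun x : ℝ => (r - |x|) ^ k := by fun_prop
  rw [← intervalIntegral.integral_add_adjacent_intervals (b := 0)
    (hcont.intervalIntegrable _ _) (hcont.intervalIntegrable _ _)]
  have hleft : ∫ x in (-r)..0, (r - |x|) ^ k = ∫ x in (-r)..0, (x + r) ^ k := by
    refine intervalIntegral.integral_congr fun x hx => ?_
    rw [uIcc_of_le (by linarith), mem_Icc] at hx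
    simp only [abs_of_nonpos hx.2, sub_neg_eq_add, add_comm]
  have hright : ∫ x in (0 : ℝ)..r, (r - |x|) ^ k = ∫ x in (0 : ℝ)..r, (r - x) ^ k := by
    refine intervalIntegral.integral_congr fun x hx => ?_
    rw [uIcc_of_le hr, mem_Icc] at hx
    simp only [abs_of_nonneg hx.1]
  rw [hleft, hright, intervalIntegral.integral_comp_add_right (· ^ k),
    intervalIntegral.integral_comp_sub_left (· ^ k)]
  simp only [neg_add_cancel, zero_add, sub_self, sub_zero, integral_pow]
  ring

theorem setIntegral_squareBipyramid_pow_mul_pow {n m : ℕ} (hn : Even n) (hm : Even m)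
    {r : ℝ} (hr : 0 ≤ r) :
    ∫ p in squareBipyramid r, p.2.1 ^ n * p.2.2 ^ m =
      2 / (n + 1) * (2 / (m + 1)) * (2 * r ^ (n + m + 3) / (n + m + 3)) := by
  rw [setIntegral_squareBipyramid_mul (continuous_pow n) (continuous_pow m),
    ← setIntegral_eq_integral_of_forall_compl_eq_zero (s := Icc (-r) r)]
  · have hslice : EqOn
        (fun x => (∫ y in Icc (-(r - |x|)) (r - |x|), y ^ n) *
          ∫ z in Icc (-(r - |x|)) (r - |x|), z ^ m)
        (fun x => 2 / (n + 1) * (2 / (m + 1)) * (r - |x|) ^ (n + m + 2)) (Icc (-r) r) := by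
      intro x hx
      have hx : 0 ≤ r - |x| := sub_nonneg.mpr (abs_le.mpr hx)
      simp only [integral_Icc_neg_pow_of_even hn hx, integral_Icc_neg_pow_of_even hm hx]
      ring
    rw [setIntegral_congr_fun measurableSet_Icc hslice, integral_const_mul,
      integral_Icc_eq_integral_Ioc, ← intervalIntegral.integral_of_le (by linarith),
      intervalIntegral_sub_abs_pow _ hr]
    push_cast
    ring
  · intro x hx
    have hx : r - |x| < 0 := sub_neg.mpr (lt_of_not_ge fun h => hx (abs_le.mp h))
    rw [Icc_eq_empty_of_lt (by linarith), setIntegral_empty, zero_mul]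

theorem counterexample_positive_square_correlation (r : ℝ) (hr : 0 < r)
    (K : Set (ℝ × ℝ × ℝ))
    (hK : K = {p | |p.1| + max |p.2.1| |p.2.2| ≤ r})
    (hvol : volume K = 1) :
    (∫ p in K, p.2.1 ^ 2) * (∫ p in K, p.2.2 ^ 2) <
      ∫ p in K, p.2.1 ^ 2 * p.2.2 ^ 2 := by
  replace hK : K = squareBipyramid r := hK
  have hr3 : r ^ 3 = 3 / 8 := by
    have h := setIntegral_squareBipyramid_pow_mul_pow Even.zero Even.zero hr.le
    simp only [pow_zero, mul_one, setIntegral_one_eq_measureReal, ← hK, Measure.real, hvol,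
      ENNReal.toReal_one] at h
    linear_combination -3 / 8 * h
  have hY : ∫ p in K, p.2.1 ^ 2 = 8 * r ^ 5 / 15 := by
    have h := setIntegral_squareBipyramid_pow_mul_pow even_two Even.zero hr.le
    simp only [pow_zero, mul_one, ← hK] at h
    linear_combination h
  have hZ : ∫ p in K, p.2.2 ^ 2 = 8 * r ^ 5 / 15 := by
    have h := setIntegral_squareBipyramid_pow_mul_pow Even.zero even_two hr.le
    simp only [pow_zero, one_mul, ← hK] at h
    linear_combination h
  have hYZ : ∫ p in K, p.2.1 ^ 2 * p.2.2 ^ 2 = 8 * r ^ 7 / 63 := by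
    have h := setIntegral_squareBipyramid_pow_mul_pow even_two even_two hr.le
    rw [← hK] at h
    linear_combination h
  rw [hY, hZ, hYZ]
  calc 8 * r ^ 5 / 15 * (8 * r ^ 5 / 15) = 8 * r ^ 7 / 75 := by
        rw [show 8 * r ^ 5 / 15 * (8 * r ^ 5 / 15) = 64 * r ^ 7 * r ^ 3 / 225 by ring, hr3]
        ring
    _ < 8 * r ^ 7 / 63 := by gcongr; norm_num
end
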